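/- Let R be an exchange ring, n ≥ 2, I a twosided ideal of R and x in I. Let u be a column in R^n and v a unimodular row in ^nR (i.e., v w = 1 for some column w) such that v u = 0. Then e + u x v lies in E_n(R,I). -/

import Mathlib

open Matrix

/-- An exchange ring: for every `x` there is an idempotent `e ∈ xR` with `1 - e ∈ (1-x)R`. -/
def IsExchangeRing (R : Type*) [Ring R] : Prop :=
  ∀ x : R, ∃ e r s : R, e * e = e ∧ e = x * r ∧ 1 - e = (1 - x) * s

/-- The elementary transvection `t_{ij}(x) = e + x e^{ij}` as an element of `GL n R`. -/
def transv {n : ℕ} {R : Type*} [Ring R] (i j : Fin n) (hij : i ≠ j) (x : R) :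
    (Matrix (Fin n) (Fin n) R)ˣ :=
  ⟨1 + Matrix.single i j x, 1 + Matrix.single i j (-x),
    by
      have h0 : Matrix.single i j (x) * Matrix.single i j (-x) = 0 :=
        Matrix.single_mul_single_of_ne (h := hij.symm) ..
      have h1 : Matrix.single i j (-x) * Matrix.single i j (x) = 0 :=
        Matrix.single_mul_single_of_ne (h := hij.symm) ..
      simp [mul_add, add_mul, h0, h1, ← Matrix.single_add, add_assoc],
    by
      have h0 : Matrix.single i j (x) * Matrix.single i j (-x) = 0 :=
        Matrix.single_mul_single_of_ne (h := hij.symm) ..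
      have h1 : Matrix.single i j (-x) * Matrix.single i j (x) = 0 :=
        Matrix.single_mul_single_of_ne (h := hij.symm) ..
      simp [mul_add, add_mul, h0, h1, ← Matrix.single_add, add_assoc]⟩

/-- The elementary subgroup `E_n(R)` of `GL_n(R)`. -/
def elemGroup (n : ℕ) (R : Type*) [Ring R] : Subgroup ((Matrix (Fin n) (Fin n) R)ˣ) :=
  Subgroup.closure { g | ∃ i j : Fin n, ∃ hij : i ≠ j, ∃ x : R, g = transv i j hij x }

/-- The preelementary subgroup `E_n(I)` of level a two-sided ideal `I`. -/
def preElem (n : ℕ) (R : Type*) [Ring R] (I : TwoSidedIdeal R) : Subgroup ((Matrix (Fin n) (Fin n) R)ˣ) :=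
  Subgroup.closure { g | ∃ i j : Fin n, ∃ hij : i ≠ j, ∃ x ∈ I, g = transv i j hij x }

/-- The relative elementary subgroup `E_n(R,I)`: the normal closure of `E_n(I)` in `E_n(R)`. -/
def relElem (n : ℕ) (R : Type*) [Ring R] (I : TwoSidedIdeal R) : Subgroup ((Matrix (Fin n) (Fin n) R)ˣ) :=
  Subgroup.closure { g | ∃ τ ∈ elemGroup n R, ∃ ε ∈ preElem n R I, g = τ⁻¹ * ε * τ }

/-- The full congruence subgroup `C_n(R,I)`: preimage of the center of `GL_n(R/I)`. -/
def congrSubgroup (n : ℕ) (R : Type*) [Ring R] (I : TwoSidedIdeal R) :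
    Subgroup ((Matrix (Fin n) (Fin n) R)ˣ) :=
  Subgroup.comap
    (Units.map ((RingHom.mapMatrix (RingCon.mk' I.ringCon)).toMonoidHom :
      Matrix (Fin n) (Fin n) R →* Matrix (Fin n) (Fin n) I.ringCon.Quotient))
    (Subgroup.center ((Matrix (Fin n) (Fin n) I.ringCon.Quotient)ˣ))

/-- `x` is a product of `m` `H`-conjugates of `a` and `a⁻¹`. -/
def IsProdConj {G : Type*} [Group G] (H : Subgroup G) (a x : G) (m : ℕ) : Prop :=
  ∃ f : Fin m → G, (∀ k, ∃ h ∈ H, f k = h⁻¹ * a * h ∨ f k = h⁻¹ * a⁻¹ * h) ∧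
    x = (List.ofFn f).prod

/-!
Elementary column operations bring the unimodular row `v` to a row `v'` whose entries are
von Neumann regular and mutually orthogonal: `v'ⱼ zⱼ v'ⱼ = v'ⱼ` and `zᵢ v'ⱼ = 0` for `i ≠ j`.
This is done one entry at a time inside a corner `gRg`: if `∑ᵢ vᵢ wᵢ = g`, the exchange property
applied to `v_{j₀} w_{j₀}` gives an idempotent `e ∈ v_{j₀} R ∩ gRg` with `g - e ∈ ∑_{i ≠ j₀} vᵢ R`;
two batches of transvections then move `v_{j₀}` into `eR` and the other entries into `(g - e)R`,
where the recursion continues.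

After conjugating by `E_n(R)` it remains to treat `1 + u v'` with `v' u = 0` and `u` over `I`,
the product over `j` of the matrices `1 + εⱼ uⱼ v'` (`εⱼ` the `j`-th unit column). For
`f = zⱼ v'ⱼ` one has `v'ⱼ f = v'ⱼ` and `f uⱼ = 0`, so the diagonal part `1 + α e_{jj}`,
`α = uⱼ v'ⱼ`, of such a factor is the commutator `[t_{jk}(α), t_{kj}(f)]`, and the rest of row `j`
is a product of transvections of level `I`.
-/

theorem one_add_mul_eq_commutator {A : Type*} [Ring A] {a b : A} (ha : a * a = 0)
    (hb : b * b = 0) (hba : b * a = 0) :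
    (1 + a) * (1 + b) * (1 - a) * (1 - b) = 1 + a * b := by
  have expand : (1 + a) * (1 + b) * (1 - a) * (1 - b) = 1 + a * b - a * a - b * a - b * b
      - a * (b * a) - a * (b * b) + a * a * b + b * a * b + a * (b * a) * b := by
    noncomm_ring
  simp [expand, ha, hb, hba]

namespace IsExchangeRing

variable {R : Type*} [Ring R]

theorem exists_idempotent_corner (hR : IsExchangeRing R) {g x : R} (hg : IsIdempotentElem g)
    (hgx : g * x = x) :
    ∃ e c d : R, IsIdempotentElem e ∧ g * e = e ∧ e * g = e ∧ e = x * c ∧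
      g - e = (g - x) * d := by
  obtain ⟨e, r, s, he, her, hes⟩ := hR x
  have hge : g * e = e := by rw [her, ← mul_assoc, hgx]
  refine ⟨e * g, r * g, s * g, ?_, by rw [← mul_assoc, hge], by rw [mul_assoc, hg.eq],
    by rw [her, mul_assoc], ?_⟩
  · change e * g * (e * g) = e * g
    rw [mul_assoc, ← mul_assoc g, hge, ← mul_assoc, he]
  · have hgs : g - e = (g - x) * s := calc
      g - e = g * (1 - e) := by rw [mul_sub, mul_one, hge]
      _ = (g - x) * s := by rw [hes, ← mul_assoc, mul_sub, mul_one, hgx]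
    rw [← mul_assoc, ← hgs, sub_mul, hg.eq]

theorem exists_idempotent_split (hR : IsExchangeRing R) {ι : Type*} [DecidableEq ι]
    {g : R} (hg : IsIdempotentElem g) {j₀ : ι} {t : Finset ι} (hj₀ : j₀ ∉ t) {v w : ι → R}
    (hv : g * v j₀ = v j₀) (hw : ∑ j ∈ insert j₀ t, v j * w j = g) :
    ∃ e c : R, ∃ d : ι → R, IsIdempotentElem e ∧ g * e = e ∧ e * g = e ∧ v j₀ * c = e ∧
      ∑ j ∈ t, v j * d j = g - e := by
  obtain ⟨e, c, d, he, hge, heg, hec, hed⟩ :=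
    hR.exists_idempotent_corner (x := v j₀ * w j₀) hg (by rw [← mul_assoc, hv])
  have hrest : ∑ j ∈ t, v j * w j = g - v j₀ * w j₀ := by
    rw [eq_sub_iff_add_eq', ← hw, Finset.sum_insert hj₀]
  refine ⟨e, w j₀ * c, fun j => w j * d, he, hge, heg, by rw [hec, mul_assoc], ?_⟩
  simp only [← mul_assoc]
  rw [← Finset.sum_mul, hrest, hed]

end IsExchangeRing

def IsCornerRegular {R ι : Type*} [Ring R] (g : R) (s : Finset ι) (v z : ι → R) : Prop :=
  ∀ j ∈ s, g * v j = v j ∧ z j * g = z j ∧ v j * z j * v j = v j ∧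
    ∀ i ∈ s, i ≠ j → z i * v j = 0

theorem IsCornerRegular.insert {R ι : Type*} [Ring R] [DecidableEq ι] {g e c : R} {j₀ : ι}
    {t : Finset ι} {v z : ι → R} (hj₀ : j₀ ∉ t) (h : IsCornerRegular (g - e) t v z)
    (hg : IsIdempotentElem g) (he : IsIdempotentElem e) (hge : g * e = e) (heg : e * g = e)
    (hev : e * v j₀ = v j₀) (hvc : v j₀ * c = e) :
    IsCornerRegular g (insert j₀ t) v (Function.update z j₀ (c * e)) := by
  have hg_ge : g * (g - e) = g - e := by rw [mul_sub, hg.eq, hge]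
  have hge_g : (g - e) * g = g - e := by rw [sub_mul, hg.eq, heg]
  have he_ge : e * (g - e) = 0 := by rw [mul_sub, heg, he.eq, sub_self]
  have hge_e : (g - e) * e = 0 := by rw [sub_mul, hge, he.eq, sub_self]
  intro j hj
  rcases Finset.mem_insert.mp hj with rfl | hjt
  · refine ⟨by rw [← hev, ← mul_assoc, hge], by rw [Function.update_self, mul_assoc, heg],
      by rw [Function.update_self, ← mul_assoc, hvc, he.eq, hev], fun i hi hij => ?_⟩
    have hit : i ∈ t := (Finset.mem_insert.mp hi).resolve_left hij
    rw [Function.update_of_ne hij, ← (h i hit).2.1, ← hev, mul_assoc, ← mul_assoc (g - e),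
      hge_e, zero_mul, mul_zero]
  · have hjne : j ≠ j₀ := ne_of_mem_of_not_mem hjt hj₀
    obtain ⟨hgv, hzg, hreg, horth⟩ := h j hjt
    rw [Function.update_of_ne hjne]
    refine ⟨by rw [← hgv, ← mul_assoc, hg_ge], by rw [← hzg, mul_assoc, hge_g], hreg,
      fun i hi hij => ?_⟩
    rcases Finset.mem_insert.mp hi with rfl | hit
    · rw [Function.update_self, ← hgv, ← mul_assoc, mul_assoc c, he_ge, mul_zero, zero_mul]
    · rw [Function.update_of_ne (ne_of_mem_of_not_mem hit hj₀), horth i hit hij]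

theorem single_eq_vecMulVec_single_one_single {m R : Type*} [DecidableEq m] [MulZeroOneClass R]
    (i j : m) (a : R) :
    single i j a = vecMulVec (Pi.single i 1) (Pi.single j a) := by
  ext k l
  simp only [single_apply, vecMulVec_apply, Pi.single_apply]
  split_ifs <;> simp_all

theorem single_eq_vecMulVec_single_single_one {m R : Type*} [DecidableEq m] [MulZeroOneClass R]
    (i j : m) (a : R) :
    single i j a = vecMulVec (Pi.single i a) (Pi.single j 1) := by
  ext k l
  simp only [single_apply, vecMulVec_apply, Pi.single_apply]
  split_ifs <;> simp_all

section RankOne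

variable {m R : Type*} [Fintype m] [Ring R]

theorem mulVec_mul_right (M : Matrix m m R) (u : m → R) (x : R) :
    M *ᵥ (fun i => u i * x) = fun i => (M *ᵥ u) i * x := by
  ext i
  simp [mulVec, dotProduct, Finset.sum_mul, mul_assoc]

theorem dotProduct_mul_right (v u : m → R) (x : R) :
    v ⬝ᵥ (fun i => u i * x) = (v ⬝ᵥ u) * x := by
  simp [dotProduct, Finset.sum_mul, mul_assoc]

variable [DecidableEq m]

theorem one_add_vecMulVec_add_left {a₁ a₂ b : m → R} (h : b ⬝ᵥ a₂ = 0) :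
    1 + vecMulVec (a₁ + a₂) b = (1 + vecMulVec a₁ b) * (1 + vecMulVec a₂ b) := by
  rw [add_vecMulVec, mul_add, add_mul, add_mul, vecMulVec_mul_vecMulVec, h, zero_smul,
    vecMulVec_zero]
  simp only [mul_one, one_mul, add_zero, add_assoc]

theorem one_add_vecMulVec_add_right {a b₁ b₂ : m → R} (h : b₁ ⬝ᵥ a = 0) :
    1 + vecMulVec a (b₁ + b₂) = (1 + vecMulVec a b₁) * (1 + vecMulVec a b₂) := by
  rw [vecMulVec_add, mul_add, add_mul, add_mul, vecMulVec_mul_vecMulVec, h, zero_smul,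
    vecMulVec_zero]
  simp only [mul_one, one_mul, add_zero, add_assoc]

theorem one_add_sum_vecMulVec_mem {ι : Type*} {S : Submonoid (Matrix m m R)} {s : Finset ι}
    {a : ι → m → R} {b : m → R} (hba : ∀ i ∈ s, b ⬝ᵥ a i = 0)
    (hS : ∀ i ∈ s, 1 + vecMulVec (a i) b ∈ S) : 1 + vecMulVec (∑ i ∈ s, a i) b ∈ S := by
  classical
  induction s using Finset.induction_on with
  | empty => simp
  | insert i s hi ih =>
    rw [Finset.sum_insert hi, add_comm (a i),
      one_add_vecMulVec_add_left (hba i (s.mem_insert_self i))]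
    exact S.mul_mem (ih (fun j hj => hba j (Finset.mem_insert_of_mem hj))
      (fun j hj => hS j (Finset.mem_insert_of_mem hj))) (hS i (s.mem_insert_self i))

theorem one_add_vecMulVec_sum_mem {ι : Type*} {S : Submonoid (Matrix m m R)} {s : Finset ι}
    {a : m → R} {b : ι → m → R} (hba : ∀ i ∈ s, b i ⬝ᵥ a = 0)
    (hS : ∀ i ∈ s, 1 + vecMulVec a (b i) ∈ S) : 1 + vecMulVec a (∑ i ∈ s, b i) ∈ S := by
  classical
  induction s using Finset.induction_on with
  | empty => simp
  | insert i s hi ih =>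
    rw [Finset.sum_insert hi, one_add_vecMulVec_add_right (hba i (s.mem_insert_self i))]
    exact S.mul_mem (hS i (s.mem_insert_self i))
      (ih (fun j hj => hba j (Finset.mem_insert_of_mem hj))
        (fun j hj => hS j (Finset.mem_insert_of_mem hj)))

theorem units_conj_one_add_vecMulVec (τ : (Matrix m m R)ˣ) (a b : m → R) :
    τ.val * (1 + vecMulVec a b) * τ⁻¹.val = 1 + vecMulVec (τ.val *ᵥ a) (b ᵥ* τ⁻¹.val) := by
  rw [mul_add, add_mul, mul_one, Units.mul_inv, mul_vecMulVec, vecMulVec_mul]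

end RankOne

section Transvections

variable {n : ℕ} {R : Type*} [Ring R] {I : TwoSidedIdeal R}

theorem transv_inv (i j : Fin n) (hij : i ≠ j) (a : R) :
    (transv i j hij a)⁻¹ = transv i j hij (-a) :=
  Units.ext rfl

theorem transv_mem_preElem {i j : Fin n} (hij : i ≠ j) {a : R} (ha : a ∈ I) :
    transv i j hij a ∈ preElem n R I :=
  Subgroup.subset_closure ⟨i, j, hij, a, ha, rfl⟩

theorem transv_mem_elemGroup {i j : Fin n} (hij : i ≠ j) (a : R) :
    transv i j hij a ∈ elemGroup n R :=
  Subgroup.subset_closure ⟨i, j, hij, a, rfl⟩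

theorem preElem_le_elemGroup : preElem n R I ≤ elemGroup n R :=
  Subgroup.closure_le _ |>.mpr fun _ ⟨_, _, hij, a, _, hg⟩ => hg ▸ transv_mem_elemGroup hij a

theorem preElem_le_relElem : preElem n R I ≤ relElem n R I := fun g hg =>
  Subgroup.subset_closure ⟨1, one_mem _, g, hg, by group⟩

theorem conj_mem_relElem {τ g : (Matrix (Fin n) (Fin n) R)ˣ} (hτ : τ ∈ elemGroup n R)
    (hg : g ∈ relElem n R I) : τ * g * τ⁻¹ ∈ relElem n R I := by
  induction hg using Subgroup.closure_induction with
  | mem g hg =>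
    obtain ⟨σ, hσ, ε, hε, rfl⟩ := hg
    exact Subgroup.subset_closure ⟨σ * τ⁻¹, mul_mem hσ (inv_mem hτ), ε, hε, by group⟩
  | one => simp
  | mul a b _ _ ha hb => simpa [mul_assoc] using mul_mem ha hb
  | inv a _ ha => simpa [mul_assoc] using inv_mem ha

theorem commutator_mem_relElem {ε τ : (Matrix (Fin n) (Fin n) R)ˣ} (hε : ε ∈ preElem n R I)
    (hτ : τ ∈ elemGroup n R) : ε * τ * ε⁻¹ * τ⁻¹ ∈ relElem n R I := by
  have hconj : τ * ε⁻¹ * τ⁻¹ ∈ relElem n R I :=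
    Subgroup.subset_closure ⟨τ⁻¹, inv_mem hτ, ε⁻¹, inv_mem hε, by group⟩
  simpa [mul_assoc] using mul_mem (preElem_le_relElem hε) hconj

theorem one_add_vecMulVec_single_one_left_mem_preElem {j : Fin n} {y : Fin n → R}
    (hyj : y j = 0) (hyI : ∀ k, y k ∈ I) :
    1 + vecMulVec (Pi.single j 1) y ∈ (preElem n R I).ofUnits := by
  rw [← Finset.univ_sum_single y]
  refine one_add_vecMulVec_sum_mem (fun k _ => ?_) (fun k _ => ?_)
  · by_cases hk : k = j <;> simp [hk, hyj]
  · by_cases hk : k = j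
    · simp [hk, hyj]
    · exact ⟨transv j k (Ne.symm hk) (y k), transv_mem_preElem _ (hyI k),
        by simp [transv, single_eq_vecMulVec_single_one_single]⟩

theorem one_add_vecMulVec_single_one_right_mem_preElem {j : Fin n} {y : Fin n → R}
    (hyj : y j = 0) (hyI : ∀ k, y k ∈ I) :
    1 + vecMulVec y (Pi.single j 1) ∈ (preElem n R I).ofUnits := by
  rw [← Finset.univ_sum_single y]
  refine one_add_sum_vecMulVec_mem (fun k _ => ?_) (fun k _ => ?_)
  · by_cases hk : k = j <;> simp [hk, hyj]
  · by_cases hk : k = j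
    · simp [hk, hyj]
    · exact ⟨transv k j hk (y k), transv_mem_preElem _ (hyI k),
        by simp [transv, single_eq_vecMulVec_single_single_one]⟩

theorem one_add_vecMulVec_single_one_left_mem_elemGroup {j : Fin n} {y : Fin n → R}
    (hyj : y j = 0) : 1 + vecMulVec (Pi.single j 1) y ∈ (elemGroup n R).ofUnits :=
  Subgroup.ofUnits_mono (preElem_le_elemGroup (I := ⊤))
    (one_add_vecMulVec_single_one_left_mem_preElem hyj fun _ => TwoSidedIdeal.mem_top R)

theorem one_add_vecMulVec_single_one_right_mem_elemGroup {j : Fin n} {y : Fin n → R}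
    (hyj : y j = 0) : 1 + vecMulVec y (Pi.single j 1) ∈ (elemGroup n R).ofUnits :=
  Subgroup.ofUnits_mono (preElem_le_elemGroup (I := ⊤))
    (one_add_vecMulVec_single_one_right_mem_preElem hyj fun _ => TwoSidedIdeal.mem_top R)

end Transvections

section RelElem

variable {n : ℕ} {R : Type*} [Ring R] {I : TwoSidedIdeal R}

theorem one_add_single_diag_mem_relElem {j k : Fin n} (hjk : j ≠ k) {α f : R} (hα : α ∈ I)
    (hαf : α * f = α) (hfα : f * α = 0) : 1 + single j j α ∈ (relElem n R I).ofUnits := by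
  refine ⟨_, commutator_mem_relElem (transv_mem_preElem hjk hα)
    (transv_mem_elemGroup hjk.symm f), ?_⟩
  have hA : single j k α * single j k α = 0 := single_mul_single_of_ne (h := hjk.symm) ..
  have hB : single k j f * single k j f = 0 := single_mul_single_of_ne (h := hjk) ..
  have hBA : single k j f * single j k α = 0 := by
    rw [single_mul_single_same, hfα, single_zero]
  simp only [transv_inv]
  change (1 + single j k α) * (1 + single k j f) * (1 + single j k (-α)) *
    (1 + single k j (-f)) = _
  rw [← single_neg, ← single_neg, ← sub_eq_add_neg, ← sub_eq_add_neg,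
    one_add_mul_eq_commutator hA hB hBA, single_mul_single_same, hαf]

theorem one_add_vecMulVec_single_mem_relElem (hn : 2 ≤ n) {j : Fin n} {c f : R}
    {v : Fin n → R} (hc : c ∈ I) (hvf : v j * f = v j) (hfc : f * c = 0) :
    1 + vecMulVec (Pi.single j c) v ∈ (relElem n R I).ofUnits := by
  obtain ⟨k, hkj⟩ := Fintype.exists_ne_of_one_lt_card (by rw [Fintype.card_fin]; omega) j
  have hsplit : vecMulVec (Pi.single j c) v = vecMulVec (Pi.single j 1)
      (Function.update (fun k => c * v k) j 0 + Pi.single j (c * v j)) := by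
    ext a b
    by_cases ha : a = j <;> by_cases hb : b = j <;> simp [vecMulVec_apply, ha, hb]
  rw [hsplit, one_add_vecMulVec_add_right (by simp)]
  refine mul_mem (Subgroup.ofUnits_mono preElem_le_relElem
    (one_add_vecMulVec_single_one_left_mem_preElem (by simp) fun k => ?_)) ?_
  · by_cases hk : k = j
    · simp [hk]
    · simpa [hk] using I.mul_mem_right _ _ hc
  · rw [← single_eq_vecMulVec_single_one_single]
    exact one_add_single_diag_mem_relElem hkj.symm (I.mul_mem_right _ _ hc)
      (by rw [mul_assoc, hvf]) (by rw [← mul_assoc, hfc, zero_mul])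

theorem one_add_vecMulVec_mem_relElem_of_regular (hn : 2 ≤ n) {u v z : Fin n → R}
    (hreg : ∀ j, v j * z j * v j = v j) (horth : ∀ i j, i ≠ j → z i * v j = 0)
    (hvu : v ⬝ᵥ u = 0) (hu : ∀ i, u i ∈ I) :
    1 + vecMulVec u v ∈ (relElem n R I).ofUnits := by
  have hzvu : ∀ j, z j * v j * u j = 0 := fun j => by
    have : z j * (v ⬝ᵥ u) = z j * v j * u j := by
      rw [dotProduct, Finset.mul_sum, Finset.sum_eq_single j
        (fun k _ hk => by rw [← mul_assoc, horth j k (Ne.symm hk), zero_mul]) (by simp),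
        mul_assoc]
    rw [← this, hvu, mul_zero]
  rw [← Finset.univ_sum_single u]
  refine one_add_sum_vecMulVec_mem (fun j _ => ?_) (fun j _ => ?_)
  · calc v ⬝ᵥ Pi.single j (u j) = v j * (z j * v j * u j) := by
          rw [dotProduct_single, ← mul_assoc, ← mul_assoc, hreg]
      _ = 0 := by rw [hzvu, mul_zero]
  · exact one_add_vecMulVec_single_mem_relElem hn (hu j) (f := z j * v j)
      (by rw [← mul_assoc, hreg]) (hzvu j)

end RelElem

section Normalization

variable {n : ℕ} {R : Type*} [Ring R]

theorem exists_vecMul_eq_of_split {g e c : R} {j₀ : Fin n} {t : Finset (Fin n)} (hj₀ : j₀ ∉ t)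
    {v d : Fin n → R} (he : IsIdempotentElem e) (heg : e * g = e) (hv : g * v j₀ = v j₀)
    (hc : v j₀ * c = e) (hd : ∑ j ∈ t, v j * d j = g - e) :
    ∃ T ∈ (elemGroup n R).ofUnits, ∀ k,
      (v ᵥ* T) k = if k = j₀ then e * v j₀ else if k ∈ t then (1 - e) * v k else v k := by
  set v₁ : Fin n → R := fun k => if k ∈ t then (1 - e) * v k else v k
  set y₁ : Fin n → R := fun k => if k ∈ t then -(c * v k) else 0
  set y₂ : Fin n → R := fun k => if k ∈ t then -(d k * v j₀) else 0
  have h₁ : v ᵥ* (1 + vecMulVec (Pi.single j₀ 1) y₁) = v₁ := by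
    ext k
    by_cases hk : k ∈ t
    · simp only [vecMul_add, vecMul_one, vecMul_vecMulVec, dotProduct_single, Pi.add_apply,
        Pi.smul_apply, smul_eq_mul, y₁, v₁, if_pos hk, ← hc]
      noncomm_ring
    · simp [vecMul_add, vecMul_vecMulVec, y₁, v₁, hk]
  have hdot : v₁ ⬝ᵥ y₂ = -((g - e) * v j₀) := calc
    v₁ ⬝ᵥ y₂ = ∑ k ∈ t, -((1 - e) * (v k * d k) * v j₀) := by
      rw [dotProduct, ← Finset.sum_subset (Finset.subset_univ t) fun k _ hk => by simp [y₂, hk]]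
      refine Finset.sum_congr rfl fun k hk => ?_
      simp [v₁, y₂, hk, mul_assoc]
    _ = -((1 - e) * (g - e) * v j₀) := by
      rw [Finset.sum_neg_distrib, ← Finset.sum_mul, ← Finset.mul_sum, hd]
    _ = -((g - e) * v j₀) := by
      rw [sub_mul, one_mul, mul_sub, heg, he.eq, sub_self, sub_zero]
  have h₂ : v₁ ᵥ* (1 + vecMulVec y₂ (Pi.single j₀ 1)) =
      fun k => if k = j₀ then e * v j₀ else if k ∈ t then (1 - e) * v k else v k := by
    rw [vecMul_add, vecMul_one, vecMul_vecMulVec, hdot]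
    ext k
    by_cases hk : k = j₀
    · subst hk
      simp only [Pi.add_apply, Pi.smul_apply, smul_eq_mul, Pi.single_eq_same, mul_one, v₁,
        if_neg hj₀, if_pos, sub_mul, hv]
      abel
    · simp [v₁, hk]
  exact ⟨_, mul_mem (one_add_vecMulVec_single_one_left_mem_elemGroup (if_neg hj₀))
    (one_add_vecMulVec_single_one_right_mem_elemGroup (if_neg hj₀)),
    fun k => by rw [← vecMul_vecMul, h₁, h₂]⟩

theorem exists_isCornerRegular_vecMul (hR : IsExchangeRing R) (s : Finset (Fin n)) :
    ∀ {g : R} {v w : Fin n → R}, IsIdempotentElem g → (∀ j ∈ s, g * v j = v j) →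
      ∑ j ∈ s, v j * w j = g → ∃ T ∈ (elemGroup n R).ofUnits,
        (∀ k ∉ s, (v ᵥ* T) k = v k) ∧ ∃ z, IsCornerRegular g s (v ᵥ* T) z := by
  induction s using Finset.induction_on with
  | empty => exact fun _ _ _ => ⟨1, one_mem _, by simp, 0, by simp [IsCornerRegular]⟩
  | insert j₀ t hj₀ ih =>
    intro g v w hg hv hw
    have hvj₀ := hv j₀ (t.mem_insert_self j₀)
    obtain ⟨e, c, d, he, hge, heg, hc, hd⟩ := hR.exists_idempotent_split hg hj₀ hvj₀ hw
    obtain ⟨T₁, hT₁, hvT₁⟩ := exists_vecMul_eq_of_split hj₀ he heg hvj₀ hc hd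
    have hg' : IsIdempotentElem (g - e) := he.sub hg heg hge
    have hv₁ : ∀ j ∈ t, (v ᵥ* T₁) j = (g - e) * v j := fun j hj => by
      rw [hvT₁, if_neg (ne_of_mem_of_not_mem hj hj₀), if_pos hj, sub_mul, sub_mul, one_mul,
        hv j (Finset.mem_insert_of_mem hj)]
    obtain ⟨T₂, hT₂, hfix, z, hz⟩ := ih (v := v ᵥ* T₁) (w := d) hg'
      (fun j hj => by rw [hv₁ j hj, ← mul_assoc, hg'.eq])
      (by rw [Finset.sum_congr rfl fun j hj => by rw [hv₁ j hj, mul_assoc], ← Finset.mul_sum,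
        hd, hg'.eq])
    have hvT₁₂ : (v ᵥ* T₁ ᵥ* T₂) j₀ = e * v j₀ := by rw [hfix j₀ hj₀, hvT₁, if_pos rfl]
    refine ⟨T₁ * T₂, mul_mem hT₁ hT₂, fun k hk => ?_, Function.update z j₀ (c * e), ?_⟩
    · rw [Finset.mem_insert, not_or] at hk
      rw [← vecMul_vecMul, hfix k hk.2, hvT₁, if_neg hk.1, if_neg hk.2]
    · rw [← vecMul_vecMul]
      exact hz.insert hj₀ hg he hge heg (by rw [hvT₁₂, ← mul_assoc, he.eq])
        (by rw [hvT₁₂, mul_assoc, hc, he.eq])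

theorem exists_vecMul_regular (hR : IsExchangeRing R) {v w : Fin n → R} (hw : v ⬝ᵥ w = 1) :
    ∃ τ ∈ elemGroup n R, ∃ z : Fin n → R,
      (∀ j, (v ᵥ* τ.val) j * z j * (v ᵥ* τ.val) j = (v ᵥ* τ.val) j) ∧
        ∀ i j, i ≠ j → z i * (v ᵥ* τ.val) j = 0 := by
  obtain ⟨_, ⟨τ, hτ, rfl⟩, -, z, hz⟩ :=
    exists_isCornerRegular_vecMul hR Finset.univ IsIdempotentElem.one (by simp) hw
  exact ⟨τ, hτ, z, fun j => (hz j (Finset.mem_univ j)).2.2.1,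
    fun i j hij => (hz j (Finset.mem_univ j)).2.2.2 i (Finset.mem_univ i) hij⟩

end Normalization

theorem one_add_uxv_mem_relElem {n : ℕ} (R : Type*) [Ring R] (hR : IsExchangeRing R)
    (hn : 2 ≤ n) (I : TwoSidedIdeal R) (x : R) (hx : x ∈ I) (u v : Fin n → R)
    (hunim : ∃ w : Fin n → R, ∑ k, v k * w k = 1) (huv : ∑ k, v k * u k = 0) :
    ∃ g ∈ relElem n R I,
      g.val = 1 + Matrix.vecMulVec (fun a => u a * x) v := by
  obtain ⟨w, hw⟩ := hunim
  obtain ⟨τ, hτ, z, hreg, horth⟩ := exists_vecMul_regular hR (v := v) hw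
  have hv : v ᵥ* τ.val ᵥ* τ⁻¹.val = v := by rw [vecMul_vecMul, Units.mul_inv, vecMul_one]
  have hvu : (v ᵥ* τ.val) ⬝ᵥ (fun i => (τ⁻¹.val *ᵥ u) i * x) = 0 := by
    rw [dotProduct_mul_right, dotProduct_mulVec, hv]
    exact huv ▸ zero_mul x
  obtain ⟨G, hG, hGval⟩ := one_add_vecMulVec_mem_relElem_of_regular hn hreg horth hvu
    fun i => I.mul_mem_left _ _ hx
  rw [Units.coeHom_apply] at hGval
  refine ⟨τ * G * τ⁻¹, conj_mem_relElem hτ hG, ?_⟩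
  rw [Units.val_mul, Units.val_mul, hGval, units_conj_one_add_vecMulVec, mulVec_mul_right,
    mulVec_mulVec, Units.mul_inv, one_mulVec, hv]
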